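/- arXiv:2002.06647 — 4 statements merged into one kernel-verified Lean document; each statement's English description precedes it below -/
import Mathlib

section
/- Let (X, ξ) be a probability space, A a sub-σ-algebra, g : X → X a measurable bijection with quasi-invariant measure (ξ ∘ g⁻¹ equivalent to ξ) and density ρ = d(g⁻¹ξ)/dξ assumed strictly positive. Then for every f ∈ L¹(X, ξ): ‖E[f | gA]‖_{L¹(ξ)} = ‖E[ρ · (f ∘ g) | A]‖_{L¹(ξ)}, where gA = {gA : A ∈ A}. -/
/-!
The two conditional expectations have the same set integrals along the correspondence
`s ↦ g.symm ⁻¹' s` between `A` and `gA`: both equal `∫_{g.symm ⁻¹' s} f` by the change of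
variables `x ↦ g x`, whose Jacobian is `ρ`. Since the `L¹` norm of a function measurable for a
σ-algebra is the largest value of `∫_s ψ - ∫_{sᶜ} ψ` over sets `s` of that σ-algebra, attained
at `s = {0 ≤ ψ}`, the two norms bound each other.
-/

open MeasureTheory

section AbsIntegral

variable {X Y : Type*} {m mX : MeasurableSpace X} [mY : MeasurableSpace Y] {μ : Measure[mX] X}
  {ψ : X → ℝ}

theorem integral_abs_eq_setIntegral_sub_setIntegral_compl (hψ : Integrable ψ μ)
    (hs : MeasurableSet {x | 0 ≤ ψ x}) :
    ∫ x, |ψ x| ∂μ = ∫ x in {x | 0 ≤ ψ x}, ψ x ∂μ - ∫ x in {x | 0 ≤ ψ x}ᶜ, ψ x ∂μ := by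
  have h_pos : ∫ x in {x | 0 ≤ ψ x}, |ψ x| ∂μ = ∫ x in {x | 0 ≤ ψ x}, ψ x ∂μ :=
    setIntegral_congr_fun hs fun x hx => abs_of_nonneg hx
  have h_neg : ∫ x in {x | 0 ≤ ψ x}ᶜ, |ψ x| ∂μ = ∫ x in {x | 0 ≤ ψ x}ᶜ, -ψ x ∂μ :=
    setIntegral_congr_fun hs.compl fun x hx => abs_of_neg (not_le.mp hx)
  rw [← integral_add_compl hs hψ.abs, h_pos, h_neg, integral_neg, sub_eq_add_neg]

theorem setIntegral_sub_setIntegral_compl_le_integral_abs (hψ : Integrable ψ μ) {s : Set X}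
    (hs : MeasurableSet s) :
    ∫ x in s, ψ x ∂μ - ∫ x in sᶜ, ψ x ∂μ ≤ ∫ x, |ψ x| ∂μ := by
  have h_in : ∫ x in s, ψ x ∂μ ≤ ∫ x in s, |ψ x| ∂μ :=
    integral_mono hψ.restrict hψ.abs.restrict fun x => le_abs_self _
  have h_out : -∫ x in sᶜ, ψ x ∂μ ≤ ∫ x in sᶜ, |ψ x| ∂μ := by
    rw [← integral_neg]
    exact integral_mono hψ.restrict.neg hψ.abs.restrict fun x => neg_le_abs _
  linarith [integral_add_compl hs hψ.abs]

theorem integral_abs_le_of_setIntegral_eq_setIntegral_preimage {ν : Measure Y} {h : Y → ℝ}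
    (hm : m ≤ mX)
    (hψm : StronglyMeasurable[m] ψ) (hψ : Integrable ψ μ) (hh : Integrable h ν) {φ : Y → X}
    (hφ : Measurable φ)
    (h_eq : ∀ s, MeasurableSet[m] s → ∫ x in s, ψ x ∂μ = ∫ y in φ ⁻¹' s, h y ∂ν) :
    ∫ x, |ψ x| ∂μ ≤ ∫ y, |h y| ∂ν := by
  have hs : MeasurableSet[m] {x | 0 ≤ ψ x} := measurableSet_le measurable_const hψm.measurable
  rw [integral_abs_eq_setIntegral_sub_setIntegral_compl hψ (hm _ hs), h_eq _ hs,
    h_eq _ hs.compl, Set.preimage_compl]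
  exact setIntegral_sub_setIntegral_compl_le_integral_abs hh (hφ (hm _ hs))

end AbsIntegral

section ChangeOfVariables

variable {X Y : Type*} {m mX : MeasurableSpace X} [mY : MeasurableSpace Y] {μ : Measure Y}
  {ν : Measure[mX] X} (g : X ≃ᵐ Y) {ρ : X → ℝ}

theorem setIntegral_mul_comp_eq_setIntegral_preimage_symm (hρm : Measurable ρ)
    (hρ : ∀ x, 0 ≤ ρ x) (hRN : μ.map g.symm = ν.withDensity (fun x => ENNReal.ofReal (ρ x)))
    (f : Y → ℝ) {s : Set X} (hs : MeasurableSet s) :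
    ∫ x in s, ρ x * f (g x) ∂ν = ∫ y in g.symm ⁻¹' s, f y ∂μ := by
  calc ∫ x in s, ρ x * f (g x) ∂ν
      = ∫ x in s, f (g x) ∂ν.withDensity (fun x => (Real.toNNReal (ρ x) : ENNReal)) := by
        rw [setIntegral_withDensity_eq_setIntegral_smul hρm.real_toNNReal _ hs]
        exact setIntegral_congr_fun hs fun x _ => by
          simp [NNReal.smul_def, Real.coe_toNNReal _ (hρ x)]
    _ = ∫ x in s, f (g x) ∂μ.map g.symm := by rw [hRN]; rfl
    _ = ∫ y in g.symm ⁻¹' s, f (g (g.symm y)) ∂μ := setIntegral_map_equiv g.symm _ s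
    _ = ∫ y in g.symm ⁻¹' s, f y ∂μ := by simp only [MeasurableEquiv.apply_symm_apply]

theorem MeasurableEquiv.map_measurableSpace_le (hm : m ≤ mX) :
    MeasurableSpace.map g m ≤ mY :=
  fun _ ht => g.measurableSet_preimage.mp (hm _ ht)

theorem setIntegral_condExp_mul_comp [IsFiniteMeasure μ] [IsFiniteMeasure ν]
    (hρm : Measurable ρ) (hρ : ∀ x, 0 ≤ ρ x)
    (hRN : μ.map g.symm = ν.withDensity (fun x => ENNReal.ofReal (ρ x)))
    (hm : m ≤ mX) {f : Y → ℝ} (hf : Integrable f μ)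
    (hint : Integrable (fun x => ρ x * f (g x)) ν) {s : Set X} (hs : MeasurableSet[m] s) :
    ∫ x in s, (ν[fun x => ρ x * f (g x)|m]) x ∂ν
      = ∫ y in g.symm ⁻¹' s, (μ[f|MeasurableSpace.map g m]) y ∂μ := by
  have hs' : MeasurableSet[MeasurableSpace.map g m] (g.symm ⁻¹' s) := by
    rwa [MeasurableSpace.map_def, ← Set.preimage_comp, MeasurableEquiv.symm_comp_self]
  rw [setIntegral_condExp hm hint hs,
    setIntegral_mul_comp_eq_setIntegral_preimage_symm g hρm hρ hRN f (hm s hs),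
    setIntegral_condExp (g.map_measurableSpace_le hm) hf hs']

theorem integral_abs_condExp_map_eq [IsFiniteMeasure μ] [IsFiniteMeasure ν]
    (hρm : Measurable ρ) (hρ : ∀ x, 0 ≤ ρ x)
    (hRN : μ.map g.symm = ν.withDensity (fun x => ENNReal.ofReal (ρ x)))
    (hm : m ≤ mX) {f : Y → ℝ} (hf : Integrable f μ)
    (hint : Integrable (fun x => ρ x * f (g x)) ν) :
    ∫ y, |(μ[f|MeasurableSpace.map g m]) y| ∂μ = ∫ x, |(ν[fun x => ρ x * f (g x)|m]) x| ∂ν := by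
  have h_eq := fun s (hs : MeasurableSet[m] s) =>
    setIntegral_condExp_mul_comp g hρm hρ hRN hm hf hint hs
  apply le_antisymm
  · refine integral_abs_le_of_setIntegral_eq_setIntegral_preimage (g.map_measurableSpace_le hm)
      stronglyMeasurable_condExp integrable_condExp integrable_condExp g.measurable fun t ht => ?_
    rw [h_eq _ ht, ← Set.preimage_comp, MeasurableEquiv.self_comp_symm, Set.preimage_id]
  · exact integral_abs_le_of_setIntegral_eq_setIntegral_preimage hm stronglyMeasurable_condExp
      integrable_condExp integrable_condExp g.symm.measurable h_eq

end ChangeOfVariables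

theorem stmt10_general {X : Type*} [mX : MeasurableSpace X] (ξ : Measure X) [IsProbabilityMeasure ξ]
    (g : X ≃ᵐ X)
    (ρ : X → ℝ) (hρm : Measurable ρ) (hρpos : ∀ x, 0 < ρ x)
    (hRN : ξ.map g.symm = ξ.withDensity (fun x => ENNReal.ofReal (ρ x)))
    (m : MeasurableSpace X) (hm : m ≤ mX)
    (f : X → ℝ) (hf : Integrable f ξ)
    (hint : Integrable (fun x => ρ x * f (g x)) ξ) :
    ∫ x, |(ξ[f|MeasurableSpace.map g m]) x| ∂ξ
      = ∫ x, |(ξ[fun y => ρ y * f (g y)|m]) x| ∂ξ := by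
  -- the explicit binder `m` is a local instance, so the ambient σ-algebra has to be named
  exact integral_abs_condExp_map_eq (mX := mX) (mY := mX) g hρm (fun x => (hρpos x).le) hRN hm
    hf hint

theorem stmt10 {X : Type*} [mX : MeasurableSpace X] (ξ : Measure X) [IsProbabilityMeasure ξ]
    (g : X ≃ᵐ X)
    (ρ : X → ℝ) (hρm : Measurable ρ) (hρpos : ∀ x, 0 < ρ x)
    (hRN : ξ.map g.symm = ξ.withDensity (fun x => ENNReal.ofReal (ρ x)))
    (m : MeasurableSpace X) (hm : m ≤ mX)
    (hmg : MeasurableSpace.map g m ≤ mX)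
    (f : X → ℝ) (hf : Integrable f ξ)
    (hint : Integrable (fun x => ρ x * f (g x)) ξ) :
    ∫ x, |(ξ[f|MeasurableSpace.map g m]) x| ∂ξ
      = ∫ x, |(ξ[fun y => ρ y * f (g y)|m]) x| ∂ξ :=
  stmt10_general (mX := mX) ξ g ρ hρm hρpos hRN m hm f hf hint
end

section
/- Let (X, ξ) be a probability space, A a sub-σ-algebra, g a measurable automorphism of X preserving the measure class of ξ with ρ = d(g⁻¹ξ)/dξ > 0 a.e. Then for every f ∈ L¹(X, ξ), E[f | gA] = (E[ρ · (f∘g) | A] / E[ρ | A]) ∘ g⁻¹ almost everywhere. -/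
/-!
Put `ψ = E[ρ · (f ∘ g) | A] / E[ρ | A]`. Since `E[ρ | A] > 0` a.e., pulling the `A`-measurable
factor `ψ` out of the conditional expectation gives `E[ψ ρ | A] = E[ρ · (f ∘ g) | A]`.
Because `g` pushes `ρ ξ` forward to `ξ`, an integral over `s ∈ gA` with respect to `ξ` is the
`ρ`-weighted integral over `g⁻¹ s ∈ A` of the integrand composed with `g`, hence
`∫_s ψ ∘ g⁻¹ = ∫_{g⁻¹ s} ψ ρ = ∫_{g⁻¹ s} ρ · (f ∘ g) = ∫_s f`, which characterises `E[f | gA]`.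
The integrability of `ψ ρ` comes from the pull-out property for the Lebesgue conditional
expectation: `∫ |ψ| ρ = ∫ |ψ| E[ρ | A] = ∫ |E[ρ · (f ∘ g) | A]|`.
-/

open MeasureTheory
open scoped ENNReal

namespace MeasureTheory

variable {Ω : Type*} {m mΩ : MeasurableSpace Ω} {μ : Measure Ω}

theorem lintegral_mul_condLExp (hm : m ≤ mΩ) [SigmaFinite (μ.trim hm)] {ψ X : Ω → ℝ≥0∞}
    (hψ : Measurable[m] ψ) (hX : AEMeasurable X μ) :
    ∫⁻ ω, ψ ω * X ω ∂μ = ∫⁻ ω, ψ ω * μ⁻[X|m] ω ∂μ := by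
  have htrim : (μ.withDensity X).trim hm = (μ.trim hm).withDensity μ⁻[X|m] := by
    refine @Measure.ext _ m _ _ fun s hs => ?_
    rw [trim_measurableSet_eq hm hs, withDensity_apply _ (hm s hs), withDensity_apply _ hs,
      setLIntegral_condLExp_trim hm μ X hs]
  calc ∫⁻ ω, ψ ω * X ω ∂μ = ∫⁻ ω, ψ ω ∂(μ.withDensity X).trim hm := by
        rw [lintegral_trim hm hψ,
          lintegral_withDensity_eq_lintegral_mul₀ hX (hψ.mono hm le_rfl).aemeasurable]
        simp_rw [Pi.mul_apply, mul_comm]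
    _ = ∫⁻ ω, ψ ω * μ⁻[X|m] ω ∂μ := by
        rw [htrim, lintegral_withDensity_eq_lintegral_mul _ (measurable_condLExp m μ X) hψ,
          lintegral_trim hm ((measurable_condLExp m μ X).mul hψ)]
        simp_rw [Pi.mul_apply, mul_comm]

theorem integrable_mul_of_integrable_mul_condExp (hm : m ≤ mΩ) [SigmaFinite (μ.trim hm)]
    {ψ ρ : Ω → ℝ} (hψ : StronglyMeasurable[m] ψ) (hρ : Integrable ρ μ) (hρ_nonneg : 0 ≤ᵐ[μ] ρ)
    (h : Integrable (ψ * μ[ρ|m]) μ) : Integrable (ψ * ρ) μ := by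
  have hψ_enorm : Measurable[m] fun ω => ‖ψ ω‖ₑ := hψ.enorm
  refine ⟨(hψ.mono hm).aestronglyMeasurable.mul hρ.1, ?_⟩
  calc ∫⁻ ω, ‖(ψ * ρ) ω‖ₑ ∂μ = ∫⁻ ω, ‖ψ ω‖ₑ * ENNReal.ofReal (ρ ω) ∂μ := by
        refine lintegral_congr_ae ?_
        filter_upwards [hρ_nonneg] with ω hω
        rw [Pi.mul_apply, enorm_mul, Real.enorm_eq_ofReal hω]
    _ = ∫⁻ ω, ‖ψ ω‖ₑ * ENNReal.ofReal (μ[ρ|m] ω) ∂μ := by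
        rw [lintegral_mul_condLExp hm hψ_enorm hρ.1.aemeasurable.ennreal_ofReal]
        refine lintegral_congr_ae ?_
        filter_upwards [condLExp_ofReal m hρ hρ_nonneg] with ω hω
        rw [hω]
    _ = ∫⁻ ω, ‖(ψ * μ[ρ|m]) ω‖ₑ ∂μ := by
        refine lintegral_congr_ae ?_
        filter_upwards [condExp_nonneg (m := m) hρ_nonneg] with ω hω
        rw [Pi.mul_apply, enorm_mul, Real.enorm_eq_ofReal hω]
    _ < ∞ := h.2

theorem condExp_pos (hm : m ≤ mΩ) [SigmaFinite (μ.trim hm)] {ρ : Ω → ℝ} (hρ : Integrable ρ μ)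
    (hρ_pos : ∀ᵐ ω ∂μ, 0 < ρ ω) : ∀ᵐ ω ∂μ, 0 < μ[ρ|m] ω := by
  set s := {ω | μ[ρ|m] ω ≤ 0}
  have hs : MeasurableSet[m] s :=
    (stronglyMeasurable_condExp (m := m) (μ := μ) (f := ρ)).measurable measurableSet_Iic
  have hnull : μ (Function.support ρ ∩ s) = 0 := by
    rw [← nonpos_iff_eq_zero, ← not_lt, ← setIntegral_pos_iff_support_of_nonneg_ae
      (ae_restrict_of_ae (hρ_pos.mono fun _ hx => hx.le)) hρ.integrableOn, not_lt,
      ← setIntegral_condExp hm hρ hs]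
    exact setIntegral_nonpos (hm s hs) fun _ hω => hω
  simp_rw [ae_iff, not_lt]
  refine measure_mono_null_ae ?_ hnull
  filter_upwards [hρ_pos] with ω hω hωs using ⟨hω.ne', hωs⟩

theorem integrable_condExp_div_condExp_mul (hm : m ≤ mΩ) [SigmaFinite (μ.trim hm)]
    {ρ : Ω → ℝ} (hρ : Integrable ρ μ) (hρ_pos : ∀ᵐ ω ∂μ, 0 < ρ ω) (h : Ω → ℝ) :
    Integrable (μ[h|m] / μ[ρ|m] * ρ) μ := by
  refine integrable_mul_of_integrable_mul_condExp hm
    (stronglyMeasurable_condExp.div stronglyMeasurable_condExp) hρ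
    (hρ_pos.mono fun _ hx => hx.le) (integrable_condExp (m := m) (f := h) |>.congr ?_)
  filter_upwards [condExp_pos hm hρ hρ_pos] with ω hω
  exact (div_mul_cancel₀ _ hω.ne').symm

theorem condExp_condExp_div_condExp_mul (hm : m ≤ mΩ) [SigmaFinite (μ.trim hm)]
    {ρ : Ω → ℝ} (hρ : Integrable ρ μ) (hρ_pos : ∀ᵐ ω ∂μ, 0 < ρ ω) (h : Ω → ℝ) :
    μ[μ[h|m] / μ[ρ|m] * ρ|m] =ᵐ[μ] μ[h|m] := by
  filter_upwards [condExp_mul_of_stronglyMeasurable_left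
    (stronglyMeasurable_condExp.div stronglyMeasurable_condExp)
    (integrable_condExp_div_condExp_mul hm hρ hρ_pos h) hρ, condExp_pos hm hρ hρ_pos]
    with ω hω hpos
  rw [hω, Pi.mul_apply, Pi.div_apply, div_mul_cancel₀ _ hpos.ne']

end MeasureTheory

section QuasiInvariant

variable {X : Type*} {m mX : MeasurableSpace X} {ξ : Measure X} {g : X ≃ᵐ X} {ρ : X → ℝ}

theorem map_withDensity_ofReal_eq
    (hRN : ξ.map g.symm = ξ.withDensity fun x => ENNReal.ofReal (ρ x)) :
    (ξ.withDensity fun x => ENNReal.ofReal (ρ x)).map g = ξ := by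
  rw [← hRN, MeasurableEquiv.map_map_symm]

theorem setIntegral_eq_setIntegral_preimage_mul [SFinite ξ]
    (hRN : ξ.map g.symm = ξ.withDensity fun x => ENNReal.ofReal (ρ x))
    (hρm : Measurable ρ) (hρ_nonneg : 0 ≤ᵐ[ξ] ρ) (φ : X → ℝ) (s : Set X) :
    ∫ x in s, φ x ∂ξ = ∫ y in g ⁻¹' s, ρ y * φ (g y) ∂ξ := by
  conv_lhs => rw [← map_withDensity_ofReal_eq hRN]
  rw [setIntegral_map_equiv, setIntegral_withDensity_eq_setIntegral_toReal_smul' _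
    hρm.ennreal_ofReal (ae_of_all _ fun _ => ENNReal.ofReal_lt_top)]
  refine integral_congr_ae ?_
  filter_upwards [ae_restrict_of_ae hρ_nonneg] with y hy
  rw [ENNReal.toReal_ofReal hy, smul_eq_mul]

theorem integrable_iff_integrable_mul_comp
    (hRN : ξ.map g.symm = ξ.withDensity fun x => ENNReal.ofReal (ρ x))
    (hρm : Measurable ρ) (hρ_nonneg : 0 ≤ᵐ[ξ] ρ) {φ : X → ℝ} :
    Integrable φ ξ ↔ Integrable (fun y => ρ y * φ (g y)) ξ := by
  conv_lhs => rw [← map_withDensity_ofReal_eq hRN]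
  rw [integrable_map_equiv, integrable_withDensity_iff_integrable_smul' hρm.ennreal_ofReal
    (ae_of_all _ fun _ => ENNReal.ofReal_lt_top)]
  refine integrable_congr ?_
  filter_upwards [hρ_nonneg] with y hy
  rw [ENNReal.toReal_ofReal hy, smul_eq_mul, Function.comp_apply]

theorem comp_symm_ae_eq_condExp_map [IsFiniteMeasure ξ]
    (hRN : ξ.map g.symm = ξ.withDensity fun x => ENNReal.ofReal (ρ x))
    (hρm : Measurable ρ) (hρ_nonneg : 0 ≤ᵐ[ξ] ρ) (hm : m ≤ mX)
    (hmg : MeasurableSpace.map g m ≤ mX) {f ψ : X → ℝ} (hf : Integrable f ξ)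
    (hψ : StronglyMeasurable[m] ψ) (hψρ : Integrable (ψ * ρ) ξ)
    (hcond : ξ[ψ * ρ|m] =ᵐ[ξ] ξ[fun y => ρ y * f (g y)|m]) :
    (fun x => ψ (g.symm x)) =ᵐ[ξ] ξ[f|MeasurableSpace.map g m] := by
  have hg_symm : Measurable[MeasurableSpace.map g m, m] g.symm := fun t ht => by
    change MeasurableSet[m] (g ⁻¹' (g.symm ⁻¹' t))
    rwa [← Set.preimage_comp, MeasurableEquiv.symm_comp_self, Set.preimage_id]
  have hcomp : ∀ y, ρ y * ψ (g.symm (g y)) = (ψ * ρ) y := fun y => by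
    rw [MeasurableEquiv.symm_apply_apply, Pi.mul_apply, mul_comm]
  have hint := (integrable_iff_integrable_mul_comp hRN hρm hρ_nonneg).mp hf
  refine ae_eq_condExp_of_forall_setIntegral_eq hmg hf (fun s _ _ => ?_) (fun s hs _ => ?_)
    (hψ.comp_measurable hg_symm).aestronglyMeasurable
  · refine ((integrable_iff_integrable_mul_comp hRN hρm hρ_nonneg).mpr ?_).integrableOn
    simpa only [hcomp] using hψρ
  · have ht : MeasurableSet[m] (g ⁻¹' s) := hs
    calc ∫ x in s, ψ (g.symm x) ∂ξ = ∫ y in g ⁻¹' s, (ψ * ρ) y ∂ξ := by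
          simp only [setIntegral_eq_setIntegral_preimage_mul hRN hρm hρ_nonneg _ s, hcomp]
      _ = ∫ y in g ⁻¹' s, ξ[fun y => ρ y * f (g y)|m] y ∂ξ := by
          rw [← setIntegral_condExp hm hψρ ht]
          exact integral_congr_ae (ae_restrict_of_ae hcond)
      _ = ∫ x in s, f x ∂ξ := by
          rw [setIntegral_condExp hm hint ht,
            setIntegral_eq_setIntegral_preimage_mul hRN hρm hρ_nonneg _ s]

end QuasiInvariant

theorem stmt11_general {X : Type*} [mX : MeasurableSpace X] (ξ : Measure X) [IsProbabilityMeasure ξ]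
    (g : X ≃ᵐ X)
    (ρ : X → ℝ) (hρm : Measurable ρ) (hρpos : ∀ᵐ x ∂ξ, 0 < ρ x)
    (hRN : ξ.map g.symm = ξ.withDensity (fun x => ENNReal.ofReal (ρ x)))
    (m : MeasurableSpace X) (hm : m ≤ mX)
    (hmg : MeasurableSpace.map g m ≤ mX)
    (f : X → ℝ) (hf : Integrable f ξ) :
    ∀ᵐ x ∂ξ,
      (ξ[f|MeasurableSpace.map g m]) x
        = (ξ[fun y => ρ y * f ((@MeasurableEquiv.toEquiv X X mX mX g) y)|m]) ((@MeasurableEquiv.toEquiv X X mX mX g).symm x) / (ξ[ρ|m]) ((@MeasurableEquiv.toEquiv X X mX mX g).symm x) := by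
  have hρ_nonneg : 0 ≤ᵐ[ξ] ρ := hρpos.mono fun _ hx => hx.le
  have hρi : Integrable ρ ξ := by
    simpa using (integrable_iff_integrable_mul_comp hRN hρm hρ_nonneg).mp (integrable_const 1)
  filter_upwards [comp_symm_ae_eq_condExp_map hRN hρm hρ_nonneg hm hmg hf
    (stronglyMeasurable_condExp.div stronglyMeasurable_condExp)
    (integrable_condExp_div_condExp_mul hm hρi hρpos _)
    (condExp_condExp_div_condExp_mul hm hρi hρpos _)] with x hx
  exact hx.symm

theorem stmt11 {X : Type*} [mX : MeasurableSpace X] (ξ : Measure X) [IsProbabilityMeasure ξ]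
    (g : X ≃ᵐ X)
    (ρ : X → ℝ) (hρm : Measurable ρ) (hρpos : ∀ᵐ x ∂ξ, 0 < ρ x)
    (hRN : ξ.map g.symm = ξ.withDensity (fun x => ENNReal.ofReal (ρ x)))
    (m : MeasurableSpace X) (hm : m ≤ mX)
    (hmg : MeasurableSpace.map g m ≤ mX)
    (f : X → ℝ) (hf : Integrable f ξ) (hρi : Integrable ρ ξ)
    (hint : Integrable (fun x => ρ x * f (g x)) ξ) :
    ∀ᵐ x ∂ξ,
      (ξ[f|MeasurableSpace.map g m]) x
        = (ξ[fun y => ρ y * f ((@MeasurableEquiv.toEquiv X X mX mX g) y)|m]) ((@MeasurableEquiv.toEquiv X X mX mX g).symm x) / (ξ[ρ|m]) ((@MeasurableEquiv.toEquiv X X mX mX g).symm x) :=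
  stmt11_general (mX := mX) ξ g ρ hρm hρpos hRN m hm hmg f hf
end

section
/- Let (X, ξ) be a probability space and (f_n) a sequence of nonnegative integrable functions, f a nonnegative integrable function, all with the same integral ∫ f_n dξ = ∫ f dξ. Then α_f(t) ≤ liminf_n α_{f_n}(t) for all t ≥ 0 if and only if ∫_X |f − t| dξ ≤ liminf_n ∫_X |f_n − t| dξ for all t ≥ 0. -/
open MeasureTheory Filter

noncomputable def alphaFn {X : Type*} [MeasurableSpace X] (ξ : Measure X) (f : X → ℝ) (t : ℝ) : ℝ :=
  ∫ τ in Set.Ioi t, (ξ {x | τ ≤ f x}).toReal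

/-!
By the layer-cake formula, `α_f(t) = ∫ (f - t)⁺ dξ`. Since `|y| = 2 y⁺ - y`, on a probability
space this gives `∫ |f - t| dξ = 2 α_f(t) + t - ∫ f dξ`, an increasing affine function of
`α_f(t)` whose constant term is the same for `f` and for every `f_n`. Increasing affine maps
commute with `liminf` of bounded sequences, and `0 ≤ α_{f_n}(t) ≤ ∫ f_n dξ = ∫ f dξ` for `t ≥ 0`.
-/

theorem liminf_const_mul_add {ι : Type*} {F : Filter ι} [F.NeBot] {u : ι → ℝ} {a : ℝ} (ha : 0 ≤ a)
    (b : ℝ) (hbdd : F.IsBoundedUnder (· ≥ ·) u) (hcobdd : F.IsCoboundedUnder (· ≥ ·) u) :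
    liminf (fun i => a * u i + b) F = a * liminf u F + b := by
  have hmono : Monotone fun y : ℝ => a * y + b := fun y z hyz => by dsimp; gcongr
  exact (hmono.map_liminf_of_continuousAt u (by fun_prop) hcobdd hbdd).symm

theorem alphaFn_nonneg {X : Type*} [MeasurableSpace X] (ξ : Measure X) (f : X → ℝ) (t : ℝ) :
    0 ≤ alphaFn ξ f t :=
  integral_nonneg fun _ => ENNReal.toReal_nonneg

section

variable {X : Type*} [MeasurableSpace X] {ξ : Measure X} {f : X → ℝ}

theorem MeasureTheory.Integrable.max_sub_const_zero [IsFiniteMeasure ξ] (hf : Integrable f ξ)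
    (t : ℝ) : Integrable (fun x => max (f x - t) 0) ξ :=
  (hf.sub (integrable_const t)).sup (integrable_const 0)

theorem MeasureTheory.integral_sub_const [IsProbabilityMeasure ξ] (hf : Integrable f ξ) (t : ℝ) :
    ∫ x, (f x - t) ∂ξ = ∫ x, f x ∂ξ - t := by
  simp [integral_sub hf (integrable_const t)]

theorem alphaFn_eq_integral_max_sub_zero [IsFiniteMeasure ξ] (hf : Integrable f ξ) (t : ℝ) :
    alphaFn ξ f t = ∫ x, max (f x - t) 0 ∂ξ := by
  rw [(hf.max_sub_const_zero t).integral_eq_integral_meas_le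
    (Eventually.of_forall fun x => le_max_right _ _)]
  have hlevel : ∀ s ∈ Set.Ioi (0 : ℝ),
      ξ.real {x | s ≤ max (f x - t) 0} = ξ.real {x | s + t ≤ f x} := by
    intro s (hs : 0 < s)
    congr 1
    ext x
    simp only [Set.mem_ofPred_eq, le_max_iff]
    constructor
    · rintro (h | h) <;> linarith
    · exact fun h => Or.inl (by linarith)
  have hshift := (measurePreserving_add_right volume t).setIntegral_preimage_emb
    (Homeomorph.addRight t).measurableEmbedding (fun τ => (ξ {x | τ ≤ f x}).toReal) (Set.Ioi t)
  have hpre : (fun s : ℝ => s + t) ⁻¹' Set.Ioi t = Set.Ioi 0 := by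
    ext s
    simp
  rw [setIntegral_congr_fun measurableSet_Ioi hlevel, alphaFn, ← hshift, hpre]
  rfl

theorem alphaFn_le_integral [IsFiniteMeasure ξ] (hf : Integrable f ξ) (hf0 : ∀ x, 0 ≤ f x)
    {t : ℝ} (ht : 0 ≤ t) : alphaFn ξ f t ≤ ∫ x, f x ∂ξ := by
  rw [alphaFn_eq_integral_max_sub_zero hf]
  refine integral_mono (hf.max_sub_const_zero t) hf fun x => ?_
  exact max_le (by linarith) (hf0 x)

theorem integral_abs_sub_eq_two_mul_alphaFn [IsProbabilityMeasure ξ] (hf : Integrable f ξ)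
    (t : ℝ) : ∫ x, |f x - t| ∂ξ = 2 * alphaFn ξ f t + (t - ∫ x, f x ∂ξ) := by
  have habs : ∀ y : ℝ, |y| = 2 * max y 0 - y := by
    intro y
    rcases le_total y 0 with h | h
    · rw [abs_of_nonpos h, max_eq_right h]; ring
    · rw [abs_of_nonneg h, max_eq_left h]; ring
  have hsub : Integrable (fun x => f x - t) ξ := hf.sub (integrable_const t)
  simp_rw [habs]
  rw [integral_sub ((hf.max_sub_const_zero t).const_mul 2) hsub,
    integral_const_mul, integral_sub_const hf, alphaFn_eq_integral_max_sub_zero hf]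
  ring

end

theorem stmt12_general {X : Type*} [MeasurableSpace X] (ξ : Measure X) [IsProbabilityMeasure ξ]
    (fs : ℕ → X → ℝ) (hfs0 : ∀ n x, 0 ≤ fs n x)
    (hfsi : ∀ n, Integrable (fs n) ξ)
    (f : X → ℝ) (hfi : Integrable f ξ)
    (hsame : ∀ n, ∫ x, fs n x ∂ξ = ∫ x, f x ∂ξ) :
    (∀ t : ℝ, 0 ≤ t → alphaFn ξ f t ≤ liminf (fun n => alphaFn ξ (fs n) t) atTop)
      ↔ (∀ t : ℝ, 0 ≤ t →
          ∫ x, |f x - t| ∂ξ ≤ liminf (fun n => ∫ x, |fs n x - t| ∂ξ) atTop) := by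
  refine forall₂_congr fun t ht => ?_
  have hbdd : atTop.IsBoundedUnder (· ≥ ·) fun n => alphaFn ξ (fs n) t :=
    isBoundedUnder_of ⟨0, fun n => alphaFn_nonneg ξ (fs n) t⟩
  have hcobdd : atTop.IsCoboundedUnder (· ≥ ·) fun n => alphaFn ξ (fs n) t :=
    (isBoundedUnder_of ⟨∫ x, f x ∂ξ, fun n =>
      (alphaFn_le_integral (hfsi n) (hfs0 n) ht).trans_eq (hsame n)⟩).isCoboundedUnder_ge
  simp_rw [integral_abs_sub_eq_two_mul_alphaFn hfi, integral_abs_sub_eq_two_mul_alphaFn (hfsi _),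
    hsame]
  rw [liminf_const_mul_add zero_le_two _ hbdd hcobdd]
  constructor <;> intro h <;> linarith

theorem stmt12 {X : Type*} [MeasurableSpace X] (ξ : Measure X) [IsProbabilityMeasure ξ]
    (fs : ℕ → X → ℝ) (hfsm : ∀ n, Measurable (fs n)) (hfs0 : ∀ n x, 0 ≤ fs n x)
    (hfsi : ∀ n, Integrable (fs n) ξ)
    (f : X → ℝ) (hfm : Measurable f) (hf0 : ∀ x, 0 ≤ f x) (hfi : Integrable f ξ)
    (hsame : ∀ n, ∫ x, fs n x ∂ξ = ∫ x, f x ∂ξ) :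
    (∀ t : ℝ, 0 ≤ t → alphaFn ξ f t ≤ liminf (fun n => alphaFn ξ (fs n) t) atTop)
      ↔ (∀ t : ℝ, 0 ≤ t →
          ∫ x, |f x - t| ∂ξ ≤ liminf (fun n => ∫ x, |fs n x - t| ∂ξ) atTop) :=
  stmt12_general ξ fs hfs0 hfsi f hfi hsame
end

section
/- Let (X, ξ) be a probability space and (A_n) a sequence of sub-σ-algebras. Suppose A is a sub-σ-algebra which is an upper Kudō-limit of (A_n), i.e. limsup_n ‖E[φ|A_n]‖₁ ≤ ‖E[φ|A]‖₁ for all φ ∈ L¹(X,ξ). Then for every φ ∈ L¹(X,ξ), lim_n ‖E[φ|A_n] − E[E[φ|A] | A_n]‖₁ = 0. -/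
open MeasureTheory Filter

namespace MeasureTheory

variable {α E : Type*} {m m₀ : MeasurableSpace α} {μ : Measure α}
  [NormedAddCommGroup E] [NormedSpace ℝ E] [CompleteSpace E]

theorem condExp_condExp_self (f : α → E) : μ[μ[f | m] | m] = μ[f | m] := by
  by_cases hm : m ≤ m₀
  · by_cases hσ : SigmaFinite (μ.trim hm)
    · exact condExp_of_stronglyMeasurable hm stronglyMeasurable_condExp integrable_condExp
    · simp only [condExp_of_not_sigmaFinite hm hσ]
  · simp only [condExp_of_not_le hm]

theorem condExp_sub_condExp_self {f : α → E} (hf : Integrable f μ) :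
    μ[f - μ[f | m] | m] =ᵐ[μ] 0 := by
  filter_upwards [condExp_sub hf (integrable_condExp (m := m)) m] with x hx
  rw [hx, Pi.sub_apply, condExp_condExp_self, sub_self, Pi.zero_apply]

theorem integral_abs_condExp_sub_condExp {f g : α → ℝ} (hf : Integrable f μ)
    (hg : Integrable g μ) :
    ∫ x, |μ[f | m] x - μ[g | m] x| ∂μ = ∫ x, |μ[f - g | m] x| ∂μ := by
  refine integral_congr_ae ?_
  filter_upwards [condExp_sub hf hg m] with x hx
  simp [hx]

end MeasureTheory

theorem Filter.tendsto_zero_of_nonneg_of_limsup_nonpos {β : Type*} {l : Filter β} [l.NeBot]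
    {u : β → ℝ}
    (hnonneg : ∀ b, 0 ≤ u b) (hbdd : IsBoundedUnder (· ≤ ·) l u) (hlimsup : limsup u l ≤ 0) :
    Tendsto u l (nhds 0) :=
  have hbdd' : IsBoundedUnder (· ≥ ·) l u := isBoundedUnder_of ⟨0, hnonneg⟩
  tendsto_of_le_liminf_of_limsup_le
    (le_liminf_of_le hbdd.isCoboundedUnder_ge (Eventually.of_forall hnonneg)) hlimsup hbdd hbdd'

theorem stmt13_general {X : Type*} [mX : MeasurableSpace X] (ξ : Measure X)
    (A : ℕ → MeasurableSpace X)
    (𝒜 : MeasurableSpace X)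
    (hupper : ∀ ψ : X → ℝ, Integrable ψ ξ →
      limsup (fun n => ∫ x, |(ξ[ψ|A n]) x| ∂ξ) atTop ≤ ∫ x, |(ξ[ψ|𝒜]) x| ∂ξ) :
    ∀ φ : X → ℝ, Integrable φ ξ →
      Tendsto (fun n => ∫ x, |(ξ[φ|A n]) x - (ξ[ξ[φ|𝒜]|A n]) x| ∂ξ) atTop (nhds 0) := by
  intro φ hφ
  -- `ψ` has zero `𝒜`-projection, so the upper Kudō-limit inequality kills its `A n`-projections.
  set ψ := φ - ξ[φ|𝒜]
  have hψ : Integrable ψ ξ := hφ.sub integrable_condExp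
  have hψ𝒜 : ∫ x, |(ξ[ψ|𝒜]) x| ∂ξ = 0 :=
    (integral_congr_ae ((condExp_sub_condExp_self hφ).fun_comp abs)).trans (by simp)
  simp_rw [integral_abs_condExp_sub_condExp hφ integrable_condExp]
  refine tendsto_zero_of_nonneg_of_limsup_nonpos (fun n => integral_nonneg fun x => abs_nonneg _)
    (isBoundedUnder_of ⟨_, fun n => integral_abs_condExp_le ψ⟩) ?_
  exact hψ𝒜 ▸ hupper ψ hψ

theorem stmt13 {X : Type*} [mX : MeasurableSpace X] (ξ : Measure X) [IsProbabilityMeasure ξ]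
    (A : ℕ → MeasurableSpace X) (hA : ∀ n, A n ≤ mX)
    (𝒜 : MeasurableSpace X) (h𝒜 : 𝒜 ≤ mX)
    (hupper : ∀ ψ : X → ℝ, Integrable ψ ξ →
      limsup (fun n => ∫ x, |(ξ[ψ|A n]) x| ∂ξ) atTop ≤ ∫ x, |(ξ[ψ|𝒜]) x| ∂ξ) :
    ∀ φ : X → ℝ, Integrable φ ξ →
      Tendsto (fun n => ∫ x, |(ξ[φ|A n]) x - (ξ[ξ[φ|𝒜]|A n]) x| ∂ξ) atTop (nhds 0) :=
  stmt13_general (mX := mX) ξ A 𝒜 hupper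
end
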